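/- arXiv:2105.01250 — 5 statements merged into one kernel-verified Lean document; each statement's English description precedes it below -/
import Mathlib

section
/- Let 0 < t < 1 and let f, g, h be non-negative integrable functions on ℝⁿ satisfying h((1−t)x + t y) ≥ f(x)^{1−t} g(y)^t for all x, y ∈ ℝⁿ. Then ∫ h dx ≥ (∫ f dx)^{1−t} (∫ g dx)^t. -/
/-!
In dimension one, if `sup f = sup g = 1` then for every level `0 < s < 1` the sets `{f > s}` and
`{g > s}` are nonempty and `(1 - t) • {f > s} + t • {g > s} ⊆ {h > s}`, so the one-dimensional
Brunn–Minkowski inequality `|A| + |B| ≤ |A + B|` bounds `(1 - t) |{f > s}| + t |{g > s}|` by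
`|{h > s}|`. Integrating over `s` (layer cake) gives `(1 - t) ∫ f + t ∫ g ≤ ∫ h`; the weighted
AM–GM inequality, rescaling and truncating `f` and `g` then give the multiplicative form. The inequality passes from two measure spaces to their product by applying
it first on the fibres and then to the fibre integrals, which gives it on `ℝⁿ` by induction.
-/

open MeasureTheory Set Pointwise
open scoped ENNReal

section LayerCake

variable {α : Type*} [MeasurableSpace α] (μ : Measure α)

theorem lintegral_eq_lintegral_meas_ofReal_lt {φ : α → ℝ≥0∞} (hφ : Measurable φ)
    (hφ_top : ∀ x, φ x ≠ ∞) :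
    ∫⁻ x, φ x ∂μ = ∫⁻ r in Ioi 0, μ {x | ENNReal.ofReal r < φ x} := by
  have h := lintegral_eq_lintegral_meas_lt μ (.of_forall fun x => ENNReal.toReal_nonneg)
    hφ.ennreal_toReal.aemeasurable
  simp only [ENNReal.ofReal_toReal (hφ_top _)] at h
  rw [h]
  refine setLIntegral_congr_fun measurableSet_Ioi fun r hr => ?_
  simp only [ENNReal.ofReal_lt_iff_lt_toReal (le_of_lt hr) (hφ_top _)]

theorem measurable_measure_ofReal_lt (φ : α → ℝ≥0∞) :
    Measurable fun r : ℝ => μ {x | ENNReal.ofReal r < φ x} :=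
  Antitone.measurable fun _ _ hrr' => measure_mono fun _ hx =>
    (ENNReal.ofReal_le_ofReal hrr').trans_lt hx

theorem lintegral_eq_iSup_lintegral_min_natCast {φ : α → ℝ≥0∞} (hφ : Measurable φ) :
    ∫⁻ x, φ x ∂μ = ⨆ n : ℕ, ∫⁻ x, min (φ x) n ∂μ := by
  rw [← lintegral_iSup (fun n => hφ.min measurable_const)
    fun m n hmn x => min_le_min_left _ (Nat.cast_le.2 hmn)]
  congr with x
  rw [← inf_iSup_eq, ENNReal.iSup_natCast, inf_top_eq]

theorem AEMeasurable.exists_measurable_ge_lintegral_eq {φ : α → ℝ≥0∞}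
    (hφ : AEMeasurable φ μ) :
    ∃ ψ : α → ℝ≥0∞, Measurable ψ ∧ φ ≤ ψ ∧ ∫⁻ x, ψ x ∂μ = ∫⁻ x, φ x ∂μ := by
  obtain ⟨N, hφN, hN, hN0⟩ := exists_measurable_superset_of_null (ae_iff.1 hφ.ae_eq_mk)
  refine ⟨fun x => N.indicator (fun _ => ∞) x + hφ.mk φ x,
    (measurable_const.indicator hN).add hφ.measurable_mk, fun x => ?_, ?_⟩
  · by_cases hx : x ∈ N
    · simp [hx]
    · have : φ x = hφ.mk φ x := not_not.1 fun h => hx (hφN h)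
      simp [hx, this]
  · rw [lintegral_add_right _ hφ.measurable_mk, lintegral_indicator hN,
      setLIntegral_measure_zero _ _ hN0, zero_add, lintegral_congr_ae hφ.ae_eq_mk.symm]

end LayerCake

variable {t : ℝ}

theorem ENNReal.geom_mean_le_arith_mean2_weighted (ht0 : 0 < t) (ht1 : t < 1) (a b : ℝ≥0∞) :
    a ^ (1 - t) * b ^ t ≤ ENNReal.ofReal (1 - t) * a + ENNReal.ofReal t * b := by
  have h1t : 0 < 1 - t := sub_pos.2 ht1
  have hconj := Real.HolderConjugate.inv_inv h1t ht0 (sub_add_cancel 1 t)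
  have := ENNReal.young_inequality (a ^ (1 - t)) (b ^ t) hconj
  rwa [ENNReal.rpow_rpow_inv h1t.ne', ENNReal.rpow_rpow_inv ht0.ne',
    ENNReal.ofReal_inv_of_pos h1t, ENNReal.ofReal_inv_of_pos ht0, ENNReal.div_eq_inv_mul,
    ENNReal.div_eq_inv_mul, inv_inv, inv_inv] at this

theorem ENNReal.iSup_rpow_mul_iSup_rpow_le {ι κ : Sort*} {p q : ℝ} (hp : 0 < p) (hq : 0 < q)
    {X : ι → ℝ≥0∞} {Y : κ → ℝ≥0∞} {c : ℝ≥0∞} (h : ∀ i j, X i ^ p * Y j ^ q ≤ c) :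
    (⨆ i, X i) ^ p * (⨆ j, Y j) ^ q ≤ c := by
  have hX := (ENNReal.orderIsoRpow p hp).map_iSup X
  have hY := (ENNReal.orderIsoRpow q hq).map_iSup Y
  simp only [ENNReal.orderIsoRpow_apply] at hX hY
  rw [hX, hY, ENNReal.iSup_mul]
  exact iSup_le fun i => (ENNReal.mul_iSup _ _).trans_le (iSup_le (h i))

theorem Real.volume_add_volume_le_of_isCompact {K L : Set ℝ} (hK : IsCompact K)
    (hL : IsCompact L) (hK₀ : K.Nonempty) (hL₀ : L.Nonempty) :
    volume K + volume L ≤ volume (K + L) := by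
  set a := sSup K
  set b := sInf L
  have ha : a ∈ K := hK.sSup_mem hK₀
  have hb : b ∈ L := hL.sInf_mem hL₀
  have hinter : (K + {b}) ∩ ({a} + L) ⊆ {a + b} := by
    rintro _ ⟨⟨x, hx, _, rfl, rfl⟩, ⟨_, rfl, y, hy, hxy⟩⟩
    have := le_csSup hK.bddAbove hx
    have := csInf_le hL.bddBelow hy
    rw [mem_singleton_iff]
    linarith
  calc volume K + volume L = volume (K + {b}) + volume ({a} + L) := by simp
    _ = volume (K + {b} ∪ ({a} + L)) + volume ((K + {b}) ∩ ({a} + L)) :=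
      (measure_union_add_inter _ (isCompact_singleton.add hL).isClosed.measurableSet).symm
    _ ≤ volume (K + L) + volume {a + b} := by
      gcongr
      exact union_subset (add_subset_add_left (singleton_subset_iff.2 hb))
        (add_subset_add_right (singleton_subset_iff.2 ha))
    _ = volume (K + L) := by simp

theorem Real.volume_add_volume_le {A B : Set ℝ} (hA : MeasurableSet A) (hB : MeasurableSet B)
    (hA₀ : A.Nonempty) (hB₀ : B.Nonempty) : volume A + volume B ≤ volume (A + B) := by
  obtain ⟨a, ha⟩ := hA₀
  obtain ⟨b, hb⟩ := hB₀
  rw [hA.measure_eq_iSup_isCompact, hB.measure_eq_iSup_isCompact]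
  simp only [iSup_and']
  refine ENNReal.biSup_add_biSup_le' ⟨∅, empty_subset _, isCompact_empty⟩
    ⟨∅, empty_subset _, isCompact_empty⟩ fun K ⟨hKA, hK⟩ L ⟨hLB, hL⟩ => ?_
  -- adjoining a point makes the compact sets nonempty without changing their measure
  calc volume K + volume L ≤ volume (insert a K) + volume (insert b L) := by
        gcongr <;> exact subset_insert _ _
    _ ≤ volume (insert a K + insert b L) :=
      volume_add_volume_le_of_isCompact (hK.insert a) (hL.insert b) (insert_nonempty _ _)
        (insert_nonempty _ _)
    _ ≤ volume (A + B) :=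
      measure_mono (add_subset_add (insert_subset ha hKA) (insert_subset hb hLB))

theorem Real.weighted_volume_add_le_of_lt_iSup (ht0 : 0 < t) (ht1 : t < 1) {f g h : ℝ → ℝ≥0∞}
    (hf : Measurable f) (hg : Measurable g)
    (hfgh : ∀ x y, f x ^ (1 - t) * g y ^ t ≤ h ((1 - t) • x + t • y))
    {s : ℝ≥0∞} (hs₀ : s ≠ 0) (hs : s ≠ ∞) (hsf : s < ⨆ x, f x) (hsg : s < ⨆ y, g y) :
    ENNReal.ofReal (1 - t) * volume {x | s < f x} + ENNReal.ofReal t * volume {y | s < g y}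
      ≤ volume {z | s < h z} := by
  have h1t : 0 < 1 - t := sub_pos.2 ht1
  have hsub : (1 - t) • {x | s < f x} + t • {y | s < g y} ⊆ {z | s < h z} := by
    rintro _ ⟨_, ⟨x, hx, rfl⟩, _, ⟨y, hy, rfl⟩, rfl⟩
    calc s = s ^ (1 - t) * s ^ t := by rw [← ENNReal.rpow_add _ _ hs₀ hs]; simp
      _ < f x ^ (1 - t) * g y ^ t :=
        ENNReal.mul_lt_mul (ENNReal.rpow_lt_rpow hx h1t) (ENNReal.rpow_lt_rpow hy ht0)
      _ ≤ h _ := hfgh x y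
  calc ENNReal.ofReal (1 - t) * volume {x | s < f x} + ENNReal.ofReal t * volume {y | s < g y}
      = volume ((1 - t) • {x | s < f x}) + volume (t • {y | s < g y}) := by
        simp [abs_of_pos h1t, abs_of_pos ht0]
    _ ≤ volume ((1 - t) • {x | s < f x} + t • {y | s < g y}) :=
      Real.volume_add_volume_le
        ((measurableSet_lt measurable_const hf).const_smul_of_ne_zero h1t.ne')
        ((measurableSet_lt measurable_const hg).const_smul_of_ne_zero ht0.ne')
        (Nonempty.smul_set (lt_iSup_iff.1 hsf)) (Nonempty.smul_set (lt_iSup_iff.1 hsg))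
    _ ≤ volume {z | s < h z} := measure_mono hsub

theorem Real.weighted_lintegral_add_le_of_iSup_eq_one (ht0 : 0 < t) (ht1 : t < 1)
    {f g h : ℝ → ℝ≥0∞} (hf : Measurable f) (hg : Measurable g) (hh : Measurable h)
    (hf1 : ⨆ x, f x = 1) (hg1 : ⨆ y, g y = 1)
    (hfgh : ∀ x y, f x ^ (1 - t) * g y ^ t ≤ h ((1 - t) • x + t • y)) :
    ENNReal.ofReal (1 - t) * (∫⁻ x, f x) + ENNReal.ofReal t * ∫⁻ y, g y ≤ ∫⁻ z, h z := by
  have h1t : 0 < 1 - t := sub_pos.2 ht1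
  have hf_le (x : ℝ) : f x ≤ 1 := hf1 ▸ le_iSup f x
  have hg_le (y : ℝ) : g y ≤ 1 := hg1 ▸ le_iSup g y
  -- truncating `h` at `1` keeps the hypothesis and makes the layer-cake formula applicable
  set h₁ : ℝ → ℝ≥0∞ := fun z => min (h z) 1
  have hfgh₁ (x y : ℝ) : f x ^ (1 - t) * g y ^ t ≤ h₁ ((1 - t) • x + t • y) :=
    le_min (hfgh x y)
      (mul_le_one' (ENNReal.rpow_le_one (hf_le x) h1t.le) (ENNReal.rpow_le_one (hg_le y) ht0.le))
  have hlevel : ∀ r ∈ Ioi (0 : ℝ),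
      ENNReal.ofReal (1 - t) * volume {x | ENNReal.ofReal r < f x}
        + ENNReal.ofReal t * volume {y | ENNReal.ofReal r < g y}
        ≤ volume {z | ENNReal.ofReal r < h₁ z} := by
    intro r hr
    rcases lt_or_ge r 1 with hr1 | hr1
    · have hr1' : ENNReal.ofReal r < 1 := ENNReal.ofReal_lt_one.2 hr1
      exact Real.weighted_volume_add_le_of_lt_iSup ht0 ht1 hf hg hfgh₁ (ENNReal.ofReal_pos.2 hr).ne'
        ENNReal.ofReal_ne_top (hf1 ▸ hr1') (hg1 ▸ hr1')
    · have hr1' : 1 ≤ ENNReal.ofReal r := ENNReal.one_le_ofReal.2 hr1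
      have hfr : {x | ENNReal.ofReal r < f x} = ∅ :=
        eq_empty_of_forall_notMem fun x hx => (hx.trans_le (hf_le x)).not_ge hr1'
      have hgr : {y | ENNReal.ofReal r < g y} = ∅ :=
        eq_empty_of_forall_notMem fun y hy => (hy.trans_le (hg_le y)).not_ge hr1'
      simp [hfr, hgr]
  have hf_top (x : ℝ) : f x ≠ ∞ := ne_top_of_le_ne_top ENNReal.one_ne_top (hf_le x)
  have hg_top (y : ℝ) : g y ≠ ∞ := ne_top_of_le_ne_top ENNReal.one_ne_top (hg_le y)
  have hh₁_top (z : ℝ) : h₁ z ≠ ∞ := ne_top_of_le_ne_top ENNReal.one_ne_top (min_le_right _ _)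
  calc ENNReal.ofReal (1 - t) * (∫⁻ x, f x) + ENNReal.ofReal t * ∫⁻ y, g y
      = ∫⁻ r in Ioi 0, (ENNReal.ofReal (1 - t) * volume {x | ENNReal.ofReal r < f x}
          + ENNReal.ofReal t * volume {y | ENNReal.ofReal r < g y}) := by
        rw [lintegral_eq_lintegral_meas_ofReal_lt volume hf hf_top,
          lintegral_eq_lintegral_meas_ofReal_lt volume hg hg_top,
          lintegral_add_left ((measurable_measure_ofReal_lt volume f).const_mul _),
          lintegral_const_mul _ (measurable_measure_ofReal_lt volume f),
          lintegral_const_mul _ (measurable_measure_ofReal_lt volume g)]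
    _ ≤ ∫⁻ r in Ioi 0, volume {z | ENNReal.ofReal r < h₁ z} :=
        setLIntegral_mono (measurable_measure_ofReal_lt volume h₁) hlevel
    _ = ∫⁻ z, h₁ z :=
        (lintegral_eq_lintegral_meas_ofReal_lt volume (hh.min measurable_const) hh₁_top).symm
    _ ≤ ∫⁻ z, h z := lintegral_mono fun z => min_le_left _ _

theorem Real.lintegral_rpow_mul_le_of_iSup_ne_top (ht0 : 0 < t) (ht1 : t < 1)
    {f g h : ℝ → ℝ≥0∞} (hf : Measurable f) (hg : Measurable g) (hh : Measurable h)
    (hf_top : ⨆ x, f x ≠ ∞) (hg_top : ⨆ y, g y ≠ ∞)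
    (hfgh : ∀ x y, f x ^ (1 - t) * g y ^ t ≤ h ((1 - t) • x + t • y)) :
    (∫⁻ x, f x) ^ (1 - t) * (∫⁻ y, g y) ^ t ≤ ∫⁻ z, h z := by
  have h1t : 0 < 1 - t := sub_pos.2 ht1
  set a := ⨆ x, f x
  set b := ⨆ y, g y
  rcases eq_or_ne a 0 with ha | ha
  · have : ∫⁻ x, f x = 0 := by simp [ENNReal.iSup_eq_zero.1 ha]
    simp [this, ENNReal.zero_rpow_of_pos h1t]
  rcases eq_or_ne b 0 with hb | hb
  · have : ∫⁻ y, g y = 0 := by simp [ENNReal.iSup_eq_zero.1 hb]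
    simp [this, ENNReal.zero_rpow_of_pos ht0]
  have hsplit (c d x y : ℝ≥0∞) :
      (c * x) ^ (1 - t) * (d * y) ^ t = c ^ (1 - t) * d ^ t * (x ^ (1 - t) * y ^ t) := by
    rw [ENNReal.mul_rpow_of_nonneg _ _ h1t.le, ENNReal.mul_rpow_of_nonneg _ _ ht0.le]
    ring
  set m := a⁻¹ ^ (1 - t) * b⁻¹ ^ t
  have hm0 : m ≠ 0 := mul_ne_zero
    (ENNReal.rpow_pos (ENNReal.inv_pos.2 hf_top) (ENNReal.inv_ne_top.2 ha)).ne'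
    (ENNReal.rpow_pos (ENNReal.inv_pos.2 hg_top) (ENNReal.inv_ne_top.2 hb)).ne'
  have hm_top : m ≠ ∞ := ENNReal.mul_ne_top
    (ENNReal.rpow_ne_top_of_nonneg h1t.le (ENNReal.inv_ne_top.2 ha))
    (ENNReal.rpow_ne_top_of_nonneg ht0.le (ENNReal.inv_ne_top.2 hb))
  have key := Real.weighted_lintegral_add_le_of_iSup_eq_one ht0 ht1
    (f := fun x => a⁻¹ * f x) (g := fun y => b⁻¹ * g y) (h := fun z => m * h z)
    (hf.const_mul _) (hg.const_mul _) (hh.const_mul _)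
    (by rw [← ENNReal.mul_iSup, ENNReal.inv_mul_cancel ha hf_top])
    (by rw [← ENNReal.mul_iSup, ENNReal.inv_mul_cancel hb hg_top])
    (fun x y => by rw [hsplit]; gcongr; exact hfgh x y)
  rw [lintegral_const_mul _ hf, lintegral_const_mul _ hg, lintegral_const_mul _ hh] at key
  rw [← ENNReal.mul_le_mul_iff_right hm0 hm_top, ← hsplit]
  exact (ENNReal.geom_mean_le_arith_mean2_weighted ht0 ht1 _ _).trans key

theorem volume_preserving_finConsLinearEquiv (n : ℕ) :
    MeasurePreserving (Fin.consLinearEquiv ℝ fun _ : Fin (n + 1) => ℝ) volume volume := by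
  have he : ⇑(Fin.consLinearEquiv ℝ fun _ : Fin (n + 1) => ℝ)
      = (MeasurableEquiv.piFinSuccAbove (fun _ => ℝ) 0).symm := by
    ext p : 1
    simp only [MeasurableEquiv.piFinSuccAbove_symm_apply, Fin.insertNthEquiv_zero]
    rfl
  exact he ▸ (volume_preserving_piFinSuccAbove (fun _ : Fin (n + 1) => ℝ) 0).symm

section PrekopaLeindler

variable {E F : Type*} [AddCommGroup E] [Module ℝ E] [MeasurableSpace E]
  [AddCommGroup F] [Module ℝ F] [MeasurableSpace F]

def PrekopaLeindler (μ : Measure E) (t : ℝ) : Prop :=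
  ∀ f g h : E → ℝ≥0∞, Measurable f → Measurable g → Measurable h →
    (∀ x y, f x ^ (1 - t) * g y ^ t ≤ h ((1 - t) • x + t • y)) →
    (∫⁻ x, f x ∂μ) ^ (1 - t) * (∫⁻ y, g y ∂μ) ^ t ≤ ∫⁻ z, h z ∂μ

theorem prekopaLeindler_dirac (a : E) : PrekopaLeindler (Measure.dirac a) t := by
  intro f g h hf hg hh hfgh
  simpa [lintegral_dirac' _ hf, lintegral_dirac' _ hg, lintegral_dirac' _ hh, ← add_smul]
    using hfgh a a

theorem Real.prekopaLeindler_volume (ht0 : 0 < t) (ht1 : t < 1) :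
    PrekopaLeindler (volume : Measure ℝ) t := by
  intro f g h hf hg hh hfgh
  have h1t : 0 < 1 - t := sub_pos.2 ht1
  rw [lintegral_eq_iSup_lintegral_min_natCast volume hf,
    lintegral_eq_iSup_lintegral_min_natCast volume hg]
  refine ENNReal.iSup_rpow_mul_iSup_rpow_le h1t ht0 fun i j =>
    Real.lintegral_rpow_mul_le_of_iSup_ne_top ht0 ht1 (hf.min measurable_const)
      (hg.min measurable_const) hh ?_ ?_ fun x y => ?_
  · exact ne_top_of_le_ne_top (ENNReal.natCast_ne_top i) (iSup_le fun x => min_le_right _ _)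
  · exact ne_top_of_le_ne_top (ENNReal.natCast_ne_top j) (iSup_le fun y => min_le_right _ _)
  · exact (mul_le_mul' (ENNReal.rpow_le_rpow (min_le_left _ _) h1t.le)
      (ENNReal.rpow_le_rpow (min_le_left _ _) ht0.le)).trans (hfgh x y)

namespace PrekopaLeindler

theorem of_measurePreserving {μ : Measure E} {ν : Measure F} (hμ : PrekopaLeindler μ t)
    {e : E →ₗ[ℝ] F} (he : MeasurePreserving e μ ν) : PrekopaLeindler ν t := by
  intro f g h hf hg hh hfgh
  rw [← he.lintegral_comp hf, ← he.lintegral_comp hg, ← he.lintegral_comp hh]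
  exact hμ _ _ _ (hf.comp he.measurable) (hg.comp he.measurable) (hh.comp he.measurable)
    fun x y => by simpa using hfgh (e x) (e y)

theorem prod {μ : Measure E} {ν : Measure F} [SFinite ν] (hμ : PrekopaLeindler μ t)
    (hν : PrekopaLeindler ν t) : PrekopaLeindler (μ.prod ν) t := by
  intro f g h hf hg hh hfgh
  rw [lintegral_prod _ hf.aemeasurable, lintegral_prod _ hg.aemeasurable,
    lintegral_prod _ hh.aemeasurable]
  exact hμ _ _ _ hf.lintegral_prod_right' hg.lintegral_prod_right' hh.lintegral_prod_right'
    fun x x' => hν _ _ _ (hf.comp measurable_prodMk_left) (hg.comp measurable_prodMk_left)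
      (hh.comp measurable_prodMk_left) fun y y' => hfgh (x, y) (x', y')

theorem integral_rpow_mul_le {μ : Measure E} (hμ : PrekopaLeindler μ t) (ht0 : 0 < t)
    (ht1 : t < 1) {f g h : E → ℝ} (hf0 : ∀ x, 0 ≤ f x) (hg0 : ∀ y, 0 ≤ g y)
    (hh0 : ∀ z, 0 ≤ h z) (hf : AEStronglyMeasurable f μ) (hg : AEStronglyMeasurable g μ)
    (hh : Integrable h μ) (hfgh : ∀ x y, f x ^ (1 - t) * g y ^ t ≤ h ((1 - t) • x + t • y)) :
    (∫ x, f x ∂μ) ^ (1 - t) * (∫ y, g y ∂μ) ^ t ≤ ∫ z, h z ∂μ := by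
  have h1t : 0 < 1 - t := sub_pos.2 ht1
  obtain ⟨f₁, hf₁, hf₁f, hf₁_eq⟩ :=
    exists_measurable_le_lintegral_eq μ fun x => ENNReal.ofReal (f x)
  obtain ⟨g₁, hg₁, hg₁g, hg₁_eq⟩ :=
    exists_measurable_le_lintegral_eq μ fun y => ENNReal.ofReal (g y)
  obtain ⟨h₁, hh₁, hhh₁, hh₁_eq⟩ :=
    hh.aemeasurable.ennreal_ofReal.exists_measurable_ge_lintegral_eq
  have key := hμ f₁ g₁ h₁ hf₁ hg₁ hh₁ fun x y => calc
    f₁ x ^ (1 - t) * g₁ y ^ t ≤ ENNReal.ofReal (f x) ^ (1 - t) * ENNReal.ofReal (g y) ^ t := by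
      gcongr
      exacts [hf₁f x, hg₁g y]
    _ = ENNReal.ofReal (f x ^ (1 - t) * g y ^ t) := by
      rw [ENNReal.ofReal_mul (Real.rpow_nonneg (hf0 x) _),
        ENNReal.ofReal_rpow_of_nonneg (hf0 x) h1t.le, ENNReal.ofReal_rpow_of_nonneg (hg0 y) ht0.le]
    _ ≤ ENNReal.ofReal (h ((1 - t) • x + t • y)) := ENNReal.ofReal_le_ofReal (hfgh x y)
    _ ≤ h₁ ((1 - t) • x + t • y) := hhh₁ _
  rw [← hf₁_eq, ← hg₁_eq, hh₁_eq] at key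
  rw [integral_eq_lintegral_of_nonneg_ae (.of_forall hf0) hf,
    integral_eq_lintegral_of_nonneg_ae (.of_forall hg0) hg,
    integral_eq_lintegral_of_nonneg_ae (.of_forall hh0) hh.aestronglyMeasurable,
    ENNReal.toReal_rpow, ENNReal.toReal_rpow, ← ENNReal.toReal_mul]
  exact ENNReal.toReal_mono hh.lintegral_lt_top.ne key

end PrekopaLeindler

theorem prekopaLeindler_volume_pi (ht0 : 0 < t) (ht1 : t < 1) :
    ∀ n : ℕ, PrekopaLeindler (volume : Measure (Fin n → ℝ)) t
  | 0 => by
    rw [volume_pi, Measure.pi_of_empty]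
    exact prekopaLeindler_dirac _
  | n + 1 =>
    ((Real.prekopaLeindler_volume ht0 ht1).prod
      (prekopaLeindler_volume_pi ht0 ht1 n)).of_measurePreserving
      (e := (Fin.consLinearEquiv ℝ fun _ : Fin (n + 1) => ℝ).toLinearMap)
      (volume_preserving_finConsLinearEquiv n)

end PrekopaLeindler

/-- The Prékopa–Leindler inequality on `ℝⁿ`. -/
theorem prekopa_leindler_euclidean {n : ℕ} (t : ℝ) (ht0 : 0 < t) (ht1 : t < 1)
    (f g h : EuclideanSpace ℝ (Fin n) → ℝ)
    (hf0 : ∀ x, 0 ≤ f x) (hg0 : ∀ x, 0 ≤ g x) (hh0 : ∀ x, 0 ≤ h x)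
    (hfi : Integrable f) (hgi : Integrable g) (hhi : Integrable h)
    (hyp : ∀ x y, f x ^ (1 - t) * g y ^ t ≤ h ((1 - t) • x + t • y)) :
    (∫ x, f x) ^ (1 - t) * (∫ x, g x) ^ t ≤ ∫ x, h x :=
  ((prekopaLeindler_volume_pi ht0 ht1 n).of_measurePreserving
    (e := (WithLp.linearEquiv 2 ℝ (Fin n → ℝ)).symm.toLinearMap)
    (PiLp.volume_preserving_toLp (Fin n))).integral_rpow_mul_le ht0 ht1 hf0 hg0 hh0
    hfi.aestronglyMeasurable hgi.aestronglyMeasurable hhi hyp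
end

section
/- For symmetric positive semi-definite n×n real matrices A and B, det(A + B)^{1/n} ≥ det(A)^{1/n} + det(B)^{1/n}. -/
/-
If `A` is positive definite, write `A = Sᴴ S` with `S` invertible and put `M = S⁻ᴴ B S⁻¹ ⪰ 0`.
Then `det B = det A · ∏ μᵢ` and `det (A + B) = det A · ∏ (1 + μᵢ)` for the eigenvalues `μᵢ ≥ 0`
of `M`, so the inequality reduces to the superadditivity of the geometric mean,
`(∏ aᵢ)^{1/n} + (∏ bᵢ)^{1/n} ≤ (∏ (aᵢ + bᵢ))^{1/n}`, which is AM-GM applied to the ratios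
`aᵢ / (aᵢ + bᵢ)` and `bᵢ / (aᵢ + bᵢ)` and summed. If neither `A` nor `B` is positive definite,
both determinants vanish and the inequality is trivial.
-/

open Finset

theorem Real.geom_mean_add_geom_mean_le_weighted {ι : Type*} (s : Finset ι) {w f g : ι → ℝ}
    (hw : ∀ i ∈ s, 0 ≤ w i) (hw' : ∑ i ∈ s, w i = 1)
    (hf : ∀ i ∈ s, 0 ≤ f i) (hg : ∀ i ∈ s, 0 ≤ g i) :
    ∏ i ∈ s, f i ^ w i + ∏ i ∈ s, g i ^ w i ≤ ∏ i ∈ s, (f i + g i) ^ w i := by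
  set t := fun i => f i + g i
  have ht : ∀ i ∈ s, 0 ≤ t i := fun i hi => add_nonneg (hf i hi) (hg i hi)
  -- `x i = x i / t i * t i` also when `t i = 0`, since then `x i = 0`
  have normalize : ∀ x : ι → ℝ, (∀ i ∈ s, 0 ≤ x i) → (∀ i ∈ s, x i ≤ t i) →
      ∏ i ∈ s, x i ^ w i = (∏ i ∈ s, (x i / t i) ^ w i) * ∏ i ∈ s, t i ^ w i := by
    intro x hx hxt
    rw [← prod_mul_distrib]
    refine prod_congr rfl fun i hi => ?_
    rw [← Real.mul_rpow (div_nonneg (hx i hi) (ht i hi)) (ht i hi)]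
    rcases (ht i hi).eq_or_lt with h | h
    · rw [← h, mul_zero, le_antisymm (h ▸ hxt i hi) (hx i hi)]
    · rw [div_mul_cancel₀ _ h.ne']
  have hft : ∀ i ∈ s, 0 ≤ f i / t i := fun i hi => div_nonneg (hf i hi) (ht i hi)
  have hgt : ∀ i ∈ s, 0 ≤ g i / t i := fun i hi => div_nonneg (hg i hi) (ht i hi)
  calc ∏ i ∈ s, f i ^ w i + ∏ i ∈ s, g i ^ w i
      = (∏ i ∈ s, (f i / t i) ^ w i + ∏ i ∈ s, (g i / t i) ^ w i) * ∏ i ∈ s, t i ^ w i := by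
        rw [add_mul, ← normalize f hf fun i hi => le_add_of_nonneg_right (hg i hi),
          ← normalize g hg fun i hi => le_add_of_nonneg_left (hf i hi)]
    _ ≤ (∑ i ∈ s, w i * (f i / t i) + ∑ i ∈ s, w i * (g i / t i)) * ∏ i ∈ s, t i ^ w i := by
        gcongr ?_ * _
        · exact prod_nonneg fun i hi => Real.rpow_nonneg (ht i hi) _
        exact add_le_add (Real.geom_mean_le_arith_mean_weighted s w _ hw hw' hft)
          (Real.geom_mean_le_arith_mean_weighted s w _ hw hw' hgt)
    _ ≤ (∑ i ∈ s, w i) * ∏ i ∈ s, t i ^ w i := by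
        gcongr ?_ * _
        · exact prod_nonneg fun i hi => Real.rpow_nonneg (ht i hi) _
        rw [← sum_add_distrib]
        refine sum_le_sum fun i hi => ?_
        rw [← mul_add, ← add_div]
        exact mul_le_of_le_one_right (hw i hi) (div_self_le_one _)
    _ = ∏ i ∈ s, t i ^ w i := by rw [hw', one_mul]

namespace Matrix

variable {𝕜 n : Type*} [RCLike 𝕜] [Fintype n] [DecidableEq n]

open scoped ComplexOrder

theorem IsHermitian.det_one_add {M : Matrix n n 𝕜} (hM : M.IsHermitian) :
    (1 + M).det = ∏ i, (1 + (hM.eigenvalues i : 𝕜)) := by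
  conv_lhs => rw [hM.spectral_theorem, Unitary.conjStarAlgAut_apply, mul_assoc,
    det_one_add_mul_comm, mul_assoc, Unitary.coe_star_mul_self, mul_one,
    ← diagonal_one, diagonal_add, det_diagonal]
  simp

open scoped MatrixOrder in
theorem PosDef.exists_posSemidef_det_add {A B : Matrix n n 𝕜} (hA : A.PosDef)
    (hB : B.PosSemidef) :
    ∃ M : Matrix n n 𝕜, M.PosSemidef ∧ B.det = A.det * M.det ∧
      (A + B).det = A.det * (1 + M).det := by
  obtain ⟨S, rfl⟩ := CStarAlgebra.nonneg_iff_eq_star_mul_self.mp hA.posSemidef.nonneg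
  have hS : IsUnit S.det := (isUnit_iff_isUnit_det S).mp (isUnit_of_mul_isUnit_right hA.isUnit)
  rw [star_eq_conjTranspose]
  set M := (S⁻¹)ᴴ * B * S⁻¹
  have hSM : Sᴴ * M * S = B := by
    rw [show Sᴴ * M * S = (S⁻¹ * S)ᴴ * B * (S⁻¹ * S) by
      simp only [M, conjTranspose_mul, Matrix.mul_assoc],
      nonsing_inv_mul _ hS, conjTranspose_one, Matrix.one_mul, Matrix.mul_one]
  have hdet : ∀ X, (Sᴴ * X * S).det = (Sᴴ * S).det * X.det := fun X => by
    simp only [det_mul]; ring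
  refine ⟨M, hB.conjTranspose_mul_mul_same _, ?_, ?_⟩
  · rw [← hdet, hSM]
  · rw [← hdet, Matrix.mul_add, Matrix.add_mul, Matrix.mul_one, hSM]

variable [Nonempty n]

theorem PosSemidef.one_add_det_rpow_le {M : Matrix n n ℝ} (hM : M.PosSemidef) :
    1 + M.det ^ ((1 : ℝ) / Fintype.card n) ≤ (1 + M).det ^ ((1 : ℝ) / Fintype.card n) := by
  have hw : ∑ _i : n, (1 : ℝ) / Fintype.card n = 1 := by
    rw [Finset.sum_const, Finset.card_univ, nsmul_eq_mul]
    field_simp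
  have := Real.geom_mean_add_geom_mean_le_weighted Finset.univ (fun _ _ => by positivity) hw
    (fun _ _ => zero_le_one) fun i _ => hM.eigenvalues_nonneg i
  rw [hM.1.det_one_add, hM.1.det_eq_prod_eigenvalues]
  simpa [Real.finsetProd_rpow _ _ fun i _ => hM.eigenvalues_nonneg i,
    Real.finsetProd_rpow _ _ fun i _ => add_nonneg zero_le_one (hM.eigenvalues_nonneg i)] using this

theorem PosDef.det_rpow_add_le {A B : Matrix n n ℝ} (hA : A.PosDef)
    (hB : B.PosSemidef) :
    A.det ^ ((1 : ℝ) / Fintype.card n) + B.det ^ ((1 : ℝ) / Fintype.card n) ≤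
      (A + B).det ^ ((1 : ℝ) / Fintype.card n) := by
  obtain ⟨M, hM, hBM, hABM⟩ := hA.exists_posSemidef_det_add hB
  have hA₀ := hA.det_pos.le
  rw [hBM, hABM, Real.mul_rpow hA₀ hM.det_nonneg,
    Real.mul_rpow hA₀ (PosSemidef.one.add hM).det_nonneg, ← mul_one_add]
  exact mul_le_mul_of_nonneg_left hM.one_add_det_rpow_le (Real.rpow_nonneg hA₀ _)

theorem PosSemidef.det_rpow_add_le {A B : Matrix n n ℝ} (hA : A.PosSemidef)
    (hB : B.PosSemidef) :
    A.det ^ ((1 : ℝ) / Fintype.card n) + B.det ^ ((1 : ℝ) / Fintype.card n) ≤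
      (A + B).det ^ ((1 : ℝ) / Fintype.card n) := by
  by_cases hA₀ : A.det = 0
  · by_cases hB₀ : B.det = 0
    · rw [hA₀, hB₀, Real.zero_rpow (by simp), add_zero]
      exact Real.rpow_nonneg (hA.add hB).det_nonneg _
    · rw [add_comm, add_comm A]
      exact (hB.posDef_iff_det_ne_zero.mpr hB₀).det_rpow_add_le hA
  · exact (hA.posDef_iff_det_ne_zero.mpr hA₀).det_rpow_add_le hB

end Matrix

/-- Minkowski's determinant inequality: for symmetric positive semi-definite real
`n × n` matrices `A` and `B`, `det(A+B)^{1/n} ≥ det(A)^{1/n} + det(B)^{1/n}`. -/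
theorem minkowski_det_inequality {n : ℕ} (hn : 0 < n)
    (A B : Matrix (Fin n) (Fin n) ℝ) (hA : A.PosSemidef) (hB : B.PosSemidef) :
    A.det ^ ((1 : ℝ) / n) + B.det ^ ((1 : ℝ) / n) ≤ (A + B).det ^ ((1 : ℝ) / n) := by
  have : Nonempty (Fin n) := Fin.pos_iff_nonempty.mp hn
  simpa using hA.det_rpow_add_le hB
end

section
/- Let q ≤ −1 and φ, ψ non-negative convex functions on ℝⁿ with finite normalized dual quermassintegrals W̄_{n−q}(φ) = (∫ φ^{−q} dγₙ)^{−1/q} and W̄_{n−q}(ψ). Then for t ∈ (0,1), W̄_{n−q}((φ(1−t)) □ (ψ t)) ≤ (1−t) W̄_{n−q}(φ) + t W̄_{n−q}(ψ). -/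
open MeasureTheory
open scoped RealInnerProductSpace

/-- The Gaussian probability measure `dγₙ(x) = (2π)^{-n/2} e^{-|x|²/2} dx` on `ℝⁿ`. -/
noncomputable def gaussE (n : ℕ) : Measure (EuclideanSpace ℝ (Fin n)) :=
  volume.withDensity fun x =>
    ENNReal.ofReal ((2 * Real.pi) ^ (-(n : ℝ) / 2) * Real.exp (-‖x‖ ^ 2 / 2))

/-- Infimal convolution of real-valued functions. -/
noncomputable def infConvR {n : ℕ} (φ ψ : EuclideanSpace ℝ (Fin n) → ℝ)
    (x : EuclideanSpace ℝ (Fin n)) : ℝ :=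
  ⨅ y : EuclideanSpace ℝ (Fin n), (φ (x - y) + ψ y)

/-- Right scalar multiplication `(φ s)(x) = s φ(x/s)`. -/
noncomputable def scalR {n : ℕ} (s : ℝ) (φ : EuclideanSpace ℝ (Fin n) → ℝ)
    (x : EuclideanSpace ℝ (Fin n)) : ℝ :=
  s * φ (s⁻¹ • x)

/-! The choice `y = t • x` in the infimum bounds `(φ (1 - t)) □ (ψ t)` pointwise by
`(1 - t) φ + t ψ`, and for `p = -q ≥ 1` the quantity `(∫ f ^ p dγₙ) ^ (1 / p)` is the
`Lᵖ(γₙ)`-norm of `f ≥ 0`, which is monotone, positively homogeneous and, by Minkowski's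
inequality, subadditive. -/

section InfConv

variable {n : ℕ}

lemma infConvR_add_le {φ ψ : EuclideanSpace ℝ (Fin n) → ℝ} (hφ : ∀ x, 0 ≤ φ x)
    (hψ : ∀ x, 0 ≤ ψ x) (x y : EuclideanSpace ℝ (Fin n)) :
    infConvR φ ψ (x + y) ≤ φ x + ψ y := by
  have hbdd : BddBelow (Set.range fun z => φ (x + y - z) + ψ z) :=
    ⟨0, by rintro _ ⟨z, rfl⟩; exact add_nonneg (hφ _) (hψ _)⟩
  simpa only [infConvR, add_sub_cancel_right] using ciInf_le hbdd y

lemma infConvR_nonneg {φ ψ : EuclideanSpace ℝ (Fin n) → ℝ} (hφ : ∀ x, 0 ≤ φ x)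
    (hψ : ∀ x, 0 ≤ ψ x) (x : EuclideanSpace ℝ (Fin n)) : 0 ≤ infConvR φ ψ x :=
  le_ciInf fun _ => add_nonneg (hφ _) (hψ _)

lemma scalR_nonneg {s : ℝ} (hs : 0 ≤ s) {φ : EuclideanSpace ℝ (Fin n) → ℝ}
    (hφ : ∀ x, 0 ≤ φ x) (x : EuclideanSpace ℝ (Fin n)) : 0 ≤ scalR s φ x :=
  mul_nonneg hs (hφ _)

lemma scalR_smul {s : ℝ} (hs : s ≠ 0) (φ : EuclideanSpace ℝ (Fin n) → ℝ)
    (x : EuclideanSpace ℝ (Fin n)) : scalR s φ (s • x) = s * φ x := by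
  rw [scalR, smul_smul, inv_mul_cancel₀ hs, one_smul]

lemma infConvR_scalR_le {t : ℝ} (ht0 : 0 < t) (ht1 : t < 1)
    {φ ψ : EuclideanSpace ℝ (Fin n) → ℝ} (hφ : ∀ x, 0 ≤ φ x) (hψ : ∀ x, 0 ≤ ψ x)
    (x : EuclideanSpace ℝ (Fin n)) :
    infConvR (scalR (1 - t) φ) (scalR t ψ) x ≤ (1 - t) * φ x + t * ψ x := by
  have hs : 0 < 1 - t := sub_pos.2 ht1
  calc infConvR (scalR (1 - t) φ) (scalR t ψ) x
      = infConvR (scalR (1 - t) φ) (scalR t ψ) ((1 - t) • x + t • x) := by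
        rw [← add_smul, sub_add_cancel, one_smul]
    _ ≤ scalR (1 - t) φ ((1 - t) • x) + scalR t ψ (t • x) :=
        infConvR_add_le (scalR_nonneg hs.le hφ) (scalR_nonneg ht0.le hψ) _ _
    _ = (1 - t) * φ x + t * ψ x := by rw [scalR_smul hs.ne', scalR_smul ht0.ne']

end InfConv

section RpowIntegral

variable {α : Type*} [MeasurableSpace α] {μ : Measure α} {p : ℝ} {f g : α → ℝ}

lemma memLp_ofReal_of_integrable_rpow (hp : 0 < p) (hf : ∀ x, 0 ≤ f x)
    (hfi : Integrable (fun x => f x ^ p) μ) : MemLp f (ENNReal.ofReal p) μ := by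
  have hP : ENNReal.ofReal p ≠ 0 := by simpa using hp
  have hfm : AEStronglyMeasurable f μ := by
    have h := (Real.continuous_rpow_const (inv_nonneg.2 hp.le)).comp_aestronglyMeasurable
      hfi.aestronglyMeasurable
    simpa only [Function.comp_def, Real.rpow_rpow_inv (hf _) hp.ne'] using h
  rw [← memLp_norm_rpow_iff hfm hP ENNReal.ofReal_ne_top, ENNReal.div_self hP ENNReal.ofReal_ne_top,
    memLp_one_iff_integrable, ENNReal.toReal_ofReal hp.le]
  simpa only [Real.norm_of_nonneg (hf _)] using hfi

lemma integrable_rpow_of_memLp (hp : 0 < p) (hf : ∀ x, 0 ≤ f x)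
    (hfm : MemLp f (ENNReal.ofReal p) μ) : Integrable (fun x => f x ^ p) μ := by
  have h := hfm.integrable_norm_rpow (by simpa using hp) ENNReal.ofReal_ne_top
  simpa only [ENNReal.toReal_ofReal hp.le, Real.norm_of_nonneg (hf _)] using h

lemma integral_rpow_rpow_inv_eq_eLpNorm (hp : 0 < p) (hf : ∀ x, 0 ≤ f x)
    (hfm : MemLp f (ENNReal.ofReal p) μ) :
    (∫ x, f x ^ p ∂μ) ^ p⁻¹ = (eLpNorm f (ENNReal.ofReal p) μ).toReal := by
  rw [hfm.eLpNorm_eq_integral_rpow_norm (by simpa using hp) ENNReal.ofReal_ne_top,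
    ENNReal.toReal_ofReal hp.le, ENNReal.toReal_ofReal (by positivity)]
  simp only [Real.norm_of_nonneg (hf _)]

lemma integral_rpow_rpow_inv_mono (hp : 0 < p) (hf : ∀ x, 0 ≤ f x) (hfg : ∀ x, f x ≤ g x)
    (hgi : Integrable (fun x => g x ^ p) μ) :
    (∫ x, f x ^ p ∂μ) ^ p⁻¹ ≤ (∫ x, g x ^ p ∂μ) ^ p⁻¹ := by
  refine Real.rpow_le_rpow (integral_nonneg fun x => Real.rpow_nonneg (hf x) p) ?_
    (inv_nonneg.2 hp.le)
  exact integral_mono_of_nonneg (ae_of_all _ fun x => Real.rpow_nonneg (hf x) p) hgi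
    (ae_of_all _ fun x => Real.rpow_le_rpow (hf x) (hfg x) hp.le)

lemma integral_const_mul_rpow_rpow_inv (hp : 0 < p) {c : ℝ} (hc : 0 ≤ c) (hf : ∀ x, 0 ≤ f x) :
    (∫ x, (c * f x) ^ p ∂μ) ^ p⁻¹ = c * (∫ x, f x ^ p ∂μ) ^ p⁻¹ := by
  simp only [Real.mul_rpow hc (hf _), integral_const_mul]
  rw [Real.mul_rpow (by positivity) (integral_nonneg fun x => Real.rpow_nonneg (hf x) p),
    Real.rpow_rpow_inv hc hp.ne']

lemma integral_add_rpow_rpow_inv_le (hp : 1 ≤ p) (hf : ∀ x, 0 ≤ f x) (hg : ∀ x, 0 ≤ g x)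
    (hfm : MemLp f (ENNReal.ofReal p) μ) (hgm : MemLp g (ENNReal.ofReal p) μ) :
    (∫ x, (f x + g x) ^ p ∂μ) ^ p⁻¹ ≤ (∫ x, f x ^ p ∂μ) ^ p⁻¹ + (∫ x, g x ^ p ∂μ) ^ p⁻¹ := by
  have hp0 : 0 < p := zero_lt_one.trans_le hp
  have hP : 1 ≤ ENNReal.ofReal p := by simpa using hp
  rw [integral_rpow_rpow_inv_eq_eLpNorm hp0 (fun x => add_nonneg (hf x) (hg x)) (hfm.add hgm),
    integral_rpow_rpow_inv_eq_eLpNorm hp0 hf hfm, integral_rpow_rpow_inv_eq_eLpNorm hp0 hg hgm,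
    ← ENNReal.toReal_add hfm.eLpNorm_ne_top hgm.eLpNorm_ne_top]
  exact ENNReal.toReal_mono (ENNReal.add_ne_top.2 ⟨hfm.eLpNorm_ne_top, hgm.eLpNorm_ne_top⟩)
    (eLpNorm_add_le hfm.1 hgm.1 hP)

end RpowIntegral

theorem normalized_dual_quermass_BM_general {n : ℕ} (q : ℝ) (hq : q ≤ -1)
    (t : ℝ) (ht0 : 0 < t) (ht1 : t < 1)
    (φ ψ : EuclideanSpace ℝ (Fin n) → ℝ)
    (hφ0 : ∀ x, 0 ≤ φ x) (hψ0 : ∀ x, 0 ≤ ψ x)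
    (hφi : Integrable (fun x => φ x ^ (-q)) (gaussE n))
    (hψi : Integrable (fun x => ψ x ^ (-q)) (gaussE n)) :
    (∫ x, infConvR (scalR (1 - t) φ) (scalR t ψ) x ^ (-q) ∂gaussE n) ^ (-1 / q)
      ≤ (1 - t) * (∫ x, φ x ^ (-q) ∂gaussE n) ^ (-1 / q)
        + t * (∫ x, ψ x ^ (-q) ∂gaussE n) ^ (-1 / q) := by
  have hp : 1 ≤ -q := by linarith
  have hp0 : 0 < -q := by linarith
  have hs : 0 ≤ 1 - t := by linarith
  have hφs : ∀ x, 0 ≤ (1 - t) * φ x := fun x => mul_nonneg hs (hφ0 x)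
  have hψt : ∀ x, 0 ≤ t * ψ x := fun x => mul_nonneg ht0.le (hψ0 x)
  have hφm := (memLp_ofReal_of_integrable_rpow hp0 hφ0 hφi).const_mul (1 - t)
  have hψm := (memLp_ofReal_of_integrable_rpow hp0 hψ0 hψi).const_mul t
  rw [show -1 / q = (-q)⁻¹ by rw [neg_div, one_div, inv_neg]]
  calc (∫ x, infConvR (scalR (1 - t) φ) (scalR t ψ) x ^ (-q) ∂gaussE n) ^ (-q)⁻¹
      ≤ (∫ x, ((1 - t) * φ x + t * ψ x) ^ (-q) ∂gaussE n) ^ (-q)⁻¹ :=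
        integral_rpow_rpow_inv_mono hp0 (infConvR_nonneg (scalR_nonneg hs hφ0)
          (scalR_nonneg ht0.le hψ0)) (infConvR_scalR_le ht0 ht1 hφ0 hψ0)
          (integrable_rpow_of_memLp hp0 (fun x => add_nonneg (hφs x) (hψt x)) (hφm.add hψm))
    _ ≤ (∫ x, ((1 - t) * φ x) ^ (-q) ∂gaussE n) ^ (-q)⁻¹
          + (∫ x, (t * ψ x) ^ (-q) ∂gaussE n) ^ (-q)⁻¹ :=
        integral_add_rpow_rpow_inv_le hp hφs hψt hφm hψm
    _ = _ := by
        rw [integral_const_mul_rpow_rpow_inv hp0 hs hφ0,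
          integral_const_mul_rpow_rpow_inv hp0 ht0.le hψ0]

/-- Brunn–Minkowski type inequality for the normalized dual quermassintegrals:
for `q ≤ −1` and nonnegative convex `φ, ψ`,
`W̄_{n−q}((φ(1−t)) □ (ψ t)) ≤ (1−t) W̄_{n−q}(φ) + t W̄_{n−q}(ψ)`. -/
theorem normalized_dual_quermass_BM {n : ℕ} (q : ℝ) (hq : q ≤ -1)
    (t : ℝ) (ht0 : 0 < t) (ht1 : t < 1)
    (φ ψ : EuclideanSpace ℝ (Fin n) → ℝ)
    (hφc : ConvexOn ℝ Set.univ φ) (hψc : ConvexOn ℝ Set.univ ψ)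
    (hφ0 : ∀ x, 0 ≤ φ x) (hψ0 : ∀ x, 0 ≤ ψ x)
    (hφi : Integrable (fun x => φ x ^ (-q)) (gaussE n))
    (hψi : Integrable (fun x => ψ x ^ (-q)) (gaussE n)) :
    (∫ x, infConvR (scalR (1 - t) φ) (scalR t ψ) x ^ (-q) ∂gaussE n) ^ (-1 / q)
      ≤ (1 - t) * (∫ x, φ x ^ (-q) ∂gaussE n) ^ (-1 / q)
        + t * (∫ x, ψ x ^ (-q) ∂gaussE n) ^ (-1 / q) :=
  normalized_dual_quermass_BM_general q hq t ht0 ht1 φ ψ hφ0 hψ0 hφi hψi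
end

section
/- Let μ be a non-zero finite Borel measure on ℝⁿ not supported in a lower-dimensional subspace, and let M be the interior of the convex hull of the support of μ. For any x₀ ∈ M there exists a constant C > 0 such that every non-negative μ-integrable convex function φ : ℝⁿ → [0,∞] satisfies φ(x₀) ≤ C ∫_{ℝⁿ} φ dμ. -/
open MeasureTheory

/-- The support of a Borel measure: points all of whose open neighbourhoods have
positive measure. -/
def msupport {n : ℕ} (μ : Measure (EuclideanSpace ℝ (Fin n))) :
    Set (EuclideanSpace ℝ (Fin n)) :=
  {x | ∀ U : Set (EuclideanSpace ℝ (Fin n)), x ∈ U → IsOpen U → 0 < μ U}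

open Set Topology ENNReal

/-!
Since `x₀` is interior to the convex hull of the support, every open half-space
`{x | g x₀ < g x}` with `g ≠ 0` contains a point of the support and so has positive measure.
This measure is lower semicontinuous in `g` (inner regularity plus the tube lemma) and
invariant under positive rescaling of `g`, so compactness of the unit sphere of the dual
gives a uniform lower bound `m > 0`. For convex `φ`, the sublevel set `{φ < φ x₀}` is open and
convex and misses `x₀`, so Hahn–Banach puts a closed half-space at `x₀` inside `{φ x₀ ≤ φ}`;
Markov's inequality then yields `m * φ x₀ ≤ ∫ φ dμ`.
-/

theorem LowerSemicontinuousOn.exists_pos_forall_le {α : Type*} [TopologicalSpace α]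
    {f : α → ℝ≥0∞} {K : Set α} (hf : LowerSemicontinuousOn f K) (hK : IsCompact K)
    (hpos : ∀ x ∈ K, 0 < f x) : ∃ m > 0, ∀ x ∈ K, m ≤ f x := by
  rcases K.eq_empty_or_nonempty with rfl | hne
  · exact ⟨1, one_pos, by simp⟩
  · obtain ⟨x, hx, hmin⟩ := hf.exists_isMinOn hne hK
    exact ⟨f x, hpos x hx, hmin⟩

theorem IsOpen.lowerSemicontinuous_measure_preimage_prodMk {X E : Type*} [TopologicalSpace X]
    [TopologicalSpace E] [MeasurableSpace E] [OpensMeasurableSpace E] {U : Set (X × E)}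
    (hU : IsOpen U) (μ : Measure E) [μ.InnerRegular] :
    LowerSemicontinuous fun x ↦ μ (Prod.mk x ⁻¹' U) := by
  intro x r hr
  obtain ⟨K, hKU, hK, hrK⟩ :=
    (hU.preimage (Continuous.prodMk_right x)).measurableSet.exists_lt_isCompact hr
  have hnear : ∀ᶠ x' in 𝓝 x, ∀ e ∈ K, (x', e) ∈ U :=
    hK.eventually_forall_of_forall_eventually fun e he ↦ hU.mem_nhds (hKU he)
  filter_upwards [hnear] with x' hx' using hrK.trans_le (measure_mono hx')

theorem exists_lt_apply_of_mem_interior_convexHull {E : Type*} [NormedAddCommGroup E]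
    [NormedSpace ℝ E] [CompleteSpace E] {s : Set E} {x : E}
    (hx : x ∈ interior (convexHull ℝ s)) {f : E →L[ℝ] ℝ} (hf : f ≠ 0) :
    ∃ p ∈ s, f x < f p := by
  by_contra! h
  have hsurj : Function.Surjective f :=
    LinearMap.surjective (f := f.toLinearMap) (ContinuousLinearMap.coe_injective.ne hf)
  have hhull : convexHull ℝ s ⊆ f ⁻¹' Iic (f x) :=
    convexHull_min h ((convex_Iic _).linear_preimage f.toLinearMap)
  have := interior_mono hhull hx
  rw [f.interior_preimage hsurj, interior_Iic] at this
  exact lt_irrefl (f x) this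

theorem ConvexOn.exists_halfSpace_subset_superlevelSet {E : Type*} [NormedAddCommGroup E]
    [NormedSpace ℝ E] [FiniteDimensional ℝ E] {φ : E → ℝ} (hφ : ConvexOn ℝ univ φ) (x₀ : E) :
    ∃ g : E →L[ℝ] ℝ, {x | g x₀ ≤ g x} ⊆ {x | φ x₀ ≤ φ x} := by
  have hcont : Continuous φ := continuousOn_univ.mp (hφ.continuousOn isOpen_univ)
  have hconv : Convex ℝ {x | φ x < φ x₀} := by simpa using hφ.convex_lt (φ x₀)
  obtain ⟨g, hg⟩ :=
    geometric_hahn_banach_open_point hconv (isOpen_lt hcont continuous_const)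
      (lt_irrefl (φ x₀))
  exact ⟨g, fun x (hx : g x₀ ≤ g x) ↦ show φ x₀ ≤ φ x from
    not_lt.1 fun hlt ↦ (hg x hlt).not_ge hx⟩

section Support

variable {n : ℕ} {μ : Measure (EuclideanSpace ℝ (Fin n))} {x₀ : EuclideanSpace ℝ (Fin n)}

theorem measure_halfSpace_pos (hx₀ : x₀ ∈ interior (convexHull ℝ (msupport μ)))
    {g : EuclideanSpace ℝ (Fin n) →L[ℝ] ℝ} (hg : g ≠ 0) : 0 < μ {x | g x₀ < g x} := by
  obtain ⟨p, hp, hgp⟩ := exists_lt_apply_of_mem_interior_convexHull hx₀ hg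
  exact hp _ hgp (isOpen_lt continuous_const g.continuous)

theorem exists_pos_le_measure_halfSpace [IsFiniteMeasure μ]
    (hx₀ : x₀ ∈ interior (convexHull ℝ (msupport μ))) :
    ∃ m > 0, ∀ g : EuclideanSpace ℝ (Fin n) →L[ℝ] ℝ, g ≠ 0 → m ≤ μ {x | g x₀ < g x} := by
  have hopen : IsOpen {p : (EuclideanSpace ℝ (Fin n) →L[ℝ] ℝ) × _ | p.1 x₀ < p.1 p.2} :=
    isOpen_lt (by fun_prop) isBoundedBilinearMap_apply.continuous
  have hlsc : LowerSemicontinuous fun g : EuclideanSpace ℝ (Fin n) →L[ℝ] ℝ ↦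
      μ {x | g x₀ < g x} :=
    hopen.lowerSemicontinuous_measure_preimage_prodMk μ
  obtain ⟨m, hm, hle⟩ := (hlsc.lowerSemicontinuousOn _).exists_pos_forall_le
    (isCompact_sphere 0 1) fun g (hg : g ∈ Metric.sphere 0 1) ↦
      measure_halfSpace_pos hx₀ (ne_zero_of_mem_sphere one_ne_zero ⟨g, hg⟩)
  refine ⟨m, hm, fun g hg ↦ ?_⟩
  have hnorm : 0 < ‖g‖ := norm_pos_iff.2 hg
  have hscale : {x | g x₀ < g x} = {x | (‖g‖⁻¹ • g) x₀ < (‖g‖⁻¹ • g) x} := by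
    ext x; simp [mul_lt_mul_iff_right₀ (inv_pos.2 hnorm)]
  rw [hscale]
  exact hle _ (by simp [norm_smul, hnorm.ne'])

theorem exists_pos_le_measureReal_halfSpace [IsFiniteMeasure μ] (hμ : μ ≠ 0)
    (hx₀ : x₀ ∈ interior (convexHull ℝ (msupport μ))) :
    ∃ m > (0 : ℝ), ∀ g : EuclideanSpace ℝ (Fin n) →L[ℝ] ℝ, m ≤ μ.real {x | g x₀ ≤ g x} := by
  obtain ⟨m, hm, hle⟩ := exists_pos_le_measure_halfSpace hx₀
  have hmin_pos : 0 < min m (μ univ) := lt_min hm (Measure.measure_univ_pos.2 hμ)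
  have hmin_fin : min m (μ univ) ≠ ∞ := ((min_le_right _ _).trans_lt (measure_lt_top μ _)).ne
  refine ⟨(min m (μ univ)).toReal, ENNReal.toReal_pos hmin_pos.ne' hmin_fin, fun g ↦
    ENNReal.toReal_mono (measure_ne_top _ _) ?_⟩
  rcases eq_or_ne g 0 with rfl | hg
  · simp
  · exact (min_le_left _ _).trans <|
      (hle g hg).trans (measure_mono fun x (hx : g x₀ < g x) ↦ hx.le)

end Support

/-- If `μ` is a non-zero finite Borel measure not supported in a lower-dimensional
subspace and `x₀` lies in the interior `M` of the convex hull of the support of `μ`,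
then there is `C > 0` such that every non-negative `μ`-integrable convex function `φ`
satisfies `φ(x₀) ≤ C ∫ φ dμ`. -/
theorem convex_value_le_integral {n : ℕ} (μ : Measure (EuclideanSpace ℝ (Fin n)))
    [IsFiniteMeasure μ] (hμ : μ ≠ 0)
    (x₀ : EuclideanSpace ℝ (Fin n))
    (hx₀ : x₀ ∈ interior (convexHull ℝ (msupport μ))) :
    ∃ C > (0 : ℝ), ∀ φ : EuclideanSpace ℝ (Fin n) → ℝ,
      ConvexOn ℝ Set.univ φ → (∀ x, 0 ≤ φ x) → Integrable φ μ →
        φ x₀ ≤ C * ∫ x, φ x ∂μ := by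
  obtain ⟨m, hm, hle⟩ := exists_pos_le_measureReal_halfSpace hμ hx₀
  refine ⟨m⁻¹, inv_pos.2 hm, fun φ hφ hφ_nonneg hφ_int ↦ ?_⟩
  obtain ⟨g, hg⟩ := hφ.exists_halfSpace_subset_superlevelSet x₀
  rw [← div_eq_inv_mul, le_div_iff₀ hm]
  calc φ x₀ * m ≤ φ x₀ * μ.real {x | φ x₀ ≤ φ x} :=
        mul_le_mul_of_nonneg_left ((hle g).trans (measureReal_mono hg)) (hφ_nonneg x₀)
    _ ≤ ∫ x, φ x ∂μ := mul_meas_ge_le_integral_of_nonneg (ae_of_all μ hφ_nonneg) hφ_int _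
end

section
/- Let C be a relatively open convex subset of ℝⁿ and let (f_k) be a sequence of finite convex functions on C such that the real sequence (f_k(x)) is bounded for each x ∈ C. Then some subsequence of (f_k) converges uniformly on closed bounded subsets of C to a finite convex function f. -/
open Metric Set Filter Bornology TopologicalSpace Topology

/-- Core version of Rockafellar's compactness theorem, for an open convex subset of a
finite-dimensional normed space. -/
private lemma core_rockafellar {V : Type*} [NormedAddCommGroup V] [NormedSpace ℝ V]
    [FiniteDimensional ℝ V]
    (C : Set V) (hCopen : IsOpen C) (hCconv : Convex ℝ C)
    (f : ℕ → V → ℝ) (hconv : ∀ k, ConvexOn ℝ C (f k))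
    (hbdd : ∀ x ∈ C, ∃ M : ℝ, ∀ k, |f k x| ≤ M) :
    ∃ σ : ℕ → ℕ, StrictMono σ ∧ ∃ g : V → ℝ, ConvexOn ℝ C g ∧
      ∀ K : Set V, K ⊆ C → IsClosed K → IsBounded K →
        TendstoUniformlyOn (fun k => f (σ k)) g atTop K := by
  classical
  -- Step A: local uniform boundedness
  have locbdd : ∀ x ∈ C, ∃ r > 0, ∃ M : ℝ, ball x r ⊆ C ∧
      ∀ k, ∀ y ∈ ball x r, |f k y| ≤ M := by
    intro x hx
    obtain ⟨b, hxint, hbC⟩ := exists_mem_interior_convexHull_affineBasis (hCopen.mem_nhds hx)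
    have hrange : range ⇑b ⊆ C := (subset_convexHull ℝ _).trans hbC
    choose Mb hMb using fun i => hbdd (b i) (hrange (mem_range_self i))
    obtain ⟨Mx, hMx⟩ := hbdd x hx
    have hMx0 : 0 ≤ Mx := (abs_nonneg _).trans (hMx 0)
    set Ms : ℝ := Finset.univ.sup' Finset.univ_nonempty Mb with hMs
    obtain ⟨r, hr, hrhull⟩ := Metric.isOpen_iff.1 isOpen_interior x hxint
    have hrC : ball x r ⊆ C := fun y hy => hbC (interior_subset (hrhull hy))
    have hub : ∀ k, ∀ y ∈ ball x r, f k y ≤ Ms := by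
      intro k y hy
      obtain ⟨p, hp, hyp⟩ := (hconv k).exists_ge_of_mem_convexHull hrange
        (interior_subset (hrhull hy))
      obtain ⟨i, rfl⟩ := hp
      exact hyp.trans (((le_abs_self _).trans (hMb i k)).trans
        (Finset.le_sup' Mb (Finset.mem_univ i)))
    refine ⟨r, hr, 2 * Mx + Ms, hrC, fun k y hy => ?_⟩
    have hz : x + (x - y) ∈ ball x r := by
      rw [mem_ball_iff_norm]
      simpa [norm_sub_rev] using mem_ball_iff_norm.1 hy
    have hmid : (1/2 : ℝ) • y + (1/2 : ℝ) • (x + (x - y)) = x := by module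
    have h2 := (hconv k).2 (hrC hy) (hrC hz) (by norm_num : (0:ℝ) ≤ 1/2)
      (by norm_num : (0:ℝ) ≤ 1/2) (by norm_num : (1/2:ℝ) + 1/2 = 1)
    rw [hmid, smul_eq_mul, smul_eq_mul] at h2
    have h3 : f k (x + (x - y)) ≤ Ms := hub k _ hz
    have h4 : f k y ≤ Ms := hub k y hy
    have h5 : -Mx ≤ f k x := (abs_le.1 (hMx k)).1
    rw [abs_le]
    constructor <;> linarith
  -- Step B: local equi-Lipschitz continuity
  have lip : ∀ x ∈ C, ∃ r > 0, ∃ L : NNReal, ball x r ⊆ C ∧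
      ∀ k, LipschitzOnWith L (f k) (ball x r) := by
    intro x hx
    obtain ⟨r, hr, M, hrC, hM⟩ := locbdd x hx
    refine ⟨r/2, by positivity, (2*M/(r/2)).toNNReal,
      (ball_subset_ball (by linarith)).trans hrC, fun k => ?_⟩
    have h := ((hconv k).subset hrC (convex_ball _ _)).lipschitzOnWith_of_abs_le
      (ε := r/2) (by positivity) (fun a ha => hM k a (mem_ball.2 ha))
    have hrr : r - r/2 = r/2 := by ring
    rwa [hrr] at h
  -- Step C: a countable dense subset of C
  obtain ⟨D, hDC, hDcount, hDdense⟩ :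
      ∃ D : Set V, D ⊆ C ∧ D.Countable ∧ C ⊆ closure D := by
    obtain ⟨D, hD1, hD2, hD3⟩ :=
      (TopologicalSpace.IsSeparable.of_separableSpace C).exists_countable_dense_subset
    exact ⟨D, hD1, hD2, hD3⟩
  haveI := hDcount.to_subtype
  -- Step D: a subsequence converging pointwise on D
  choose MD hMD using fun d : D => hbdd d (hDC d.2)
  have hu : ∀ k, (fun d : D => f k d) ∈ Set.pi univ (fun d => Icc (-(MD d)) (MD d)) :=
    fun k d _ => abs_le.1 (hMD d k)
  obtain ⟨g0, -, σ, hσ, hg0⟩ :=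
    (isCompact_univ_pi fun d : D => isCompact_Icc).isSeqCompact hu
  have hptD : ∀ d : D, Tendsto (fun k => f (σ k) (d : V)) atTop (𝓝 (g0 d)) := by
    intro d
    exact tendsto_pi_nhds.1 hg0 d
  -- Step E: pointwise convergence everywhere on C
  have hlim : ∀ x ∈ C, ∃ l : ℝ, Tendsto (fun k => f (σ k) x) atTop (𝓝 l) := by
    intro x hx
    apply cauchySeq_tendsto_of_complete
    rw [Metric.cauchySeq_iff]
    intro ε hε
    obtain ⟨r, hr, L, hrC, hL⟩ := lip x hx
    have hL1 : (0:ℝ) < (L:ℝ) + 1 := by positivity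
    set δ := min r (ε / (3 * ((L:ℝ) + 1))) with hδdef
    have hδpos : 0 < δ := lt_min hr (by positivity)
    obtain ⟨d, hdD, hdx⟩ := Metric.mem_closure_iff.1 (hDdense hx) δ hδpos
    have hdball : d ∈ ball x r := by
      rw [mem_ball']
      exact hdx.trans_le (min_le_left _ _)
    have hxball : x ∈ ball x r := mem_ball_self hr
    have hcd : CauchySeq (fun k => f (σ k) d) := (hptD ⟨d, hdD⟩).cauchySeq
    obtain ⟨N, hN⟩ := Metric.cauchySeq_iff.1 hcd (ε/3) (by positivity)
    refine ⟨N, fun m hm n hn => ?_⟩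
    have hdxd : dist x d ≤ ε / (3 * ((L:ℝ) + 1)) := (hdx.trans_le (min_le_right _ _)).le
    have hsmall : (L:ℝ) * dist x d ≤ ε/3 := by
      have h1 : (L:ℝ) * dist x d ≤ ((L:ℝ)+1) * (ε / (3 * ((L:ℝ) + 1))) :=
        mul_le_mul (by linarith [L.coe_nonneg]) hdxd dist_nonneg (by positivity)
      have h2 : ((L:ℝ)+1) * (ε / (3 * ((L:ℝ) + 1))) = ε/3 := by
        field_simp
      linarith
    have h1 : dist (f (σ m) x) (f (σ m) d) ≤ (L:ℝ) * dist x d :=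
      lipschitzOnWith_iff_dist_le_mul.1 (hL (σ m)) x hxball d hdball
    have h3 : dist (f (σ n) d) (f (σ n) x) ≤ (L:ℝ) * dist x d := by
      rw [dist_comm x d] at *
      exact lipschitzOnWith_iff_dist_le_mul.1 (hL (σ n)) d hdball x hxball
    have h2 : dist (f (σ m) d) (f (σ n) d) < ε/3 := hN m hm n hn
    have htri := dist_triangle4 (f (σ m) x) (f (σ m) d) (f (σ n) d) (f (σ n) x)
    linarith
  choose! g hg using hlim
  -- the limit function is convex
  have hgconv : ConvexOn ℝ C g := by
    refine ⟨hCconv, fun x hx y hy a b ha hb hab => ?_⟩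
    have hxy : a • x + b • y ∈ C := hCconv hx hy ha hb hab
    rw [smul_eq_mul, smul_eq_mul]
    refine le_of_tendsto_of_tendsto' (hg _ hxy)
      (((hg x hx).const_mul a).add ((hg y hy).const_mul b)) (fun k => ?_)
    simpa [smul_eq_mul] using (hconv (σ k)).2 hx hy ha hb hab
  refine ⟨σ, hσ, g, hgconv, fun K hKC hKcl hKbd => ?_⟩
  have hKcpt : IsCompact K := Metric.isCompact_iff_isClosed_bounded.2 ⟨hKcl, hKbd⟩
  rw [Metric.tendstoUniformlyOn_iff]
  intro ε hε
  -- choose good balls around each point of K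
  have key : ∀ x ∈ K, ∃ ρ, 0 < ρ ∧ ball x ρ ⊆ C ∧ ∃ L : NNReal,
      (∀ k, LipschitzOnWith L (f k) (ball x ρ)) ∧ (L:ℝ) * ρ ≤ ε/3 := by
    intro x hxK
    obtain ⟨r, hr, L, hrC, hL⟩ := lip x (hKC hxK)
    have hL1 : (0:ℝ) < (L:ℝ) + 1 := by positivity
    refine ⟨min r (ε/(3*((L:ℝ)+1))), lt_min hr (by positivity),
      (ball_subset_ball (min_le_left _ _)).trans hrC, L,
      fun k => (hL k).mono (ball_subset_ball (min_le_left _ _)), ?_⟩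
    have h1 : (L:ℝ) * min r (ε/(3*((L:ℝ)+1))) ≤ ((L:ℝ)+1) * (ε/(3*((L:ℝ)+1))) :=
      mul_le_mul (by linarith [L.coe_nonneg]) (min_le_right _ _)
        (le_min hr.le (by positivity)) (by positivity)
    have h2 : ((L:ℝ)+1) * (ε/(3*((L:ℝ)+1))) = ε/3 := by
      field_simp
    linarith
  choose! ρ hρpos hρC L hLlip hLsm using key
  obtain ⟨t, htK, htcov⟩ := hKcpt.elim_nhds_subcover (fun x => ball x (ρ x))
    (fun x hx => ball_mem_nhds x (hρpos x hx))
  have hev : ∀ᶠ k in atTop, ∀ x ∈ t, dist (f (σ k) x) (g x) < ε/3 := by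
    rw [eventually_all_finset]
    intro x hxt
    have hxC : x ∈ C := hKC (htK x hxt)
    have h := (hg x hxC).eventually (Metric.ball_mem_nhds (g x) (by positivity : (0:ℝ) < ε/3))
    simpa [Metric.mem_ball] using h
  filter_upwards [hev] with k hk y hyK
  obtain ⟨x, hxt, hyx⟩ := mem_iUnion₂.1 (htcov hyK)
  have hxK := htK x hxt
  have hxC : x ∈ C := hKC hxK
  have hyC : y ∈ C := hρC x hxK hyx
  have hxball : x ∈ ball x (ρ x) := mem_ball_self (hρpos x hxK)
  have hρy : (L x : ℝ) * dist y x ≤ ε/3 := by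
    have hlt : dist y x < ρ x := mem_ball.1 hyx
    have := mul_le_mul_of_nonneg_left hlt.le (L x).coe_nonneg
    linarith [hLsm x hxK]
  have hgL : dist (g y) (g x) ≤ (L x : ℝ) * dist y x := by
    refine le_of_tendsto ((hg y hyC).dist (hg x hxC)) (Eventually.of_forall fun j => ?_)
    exact lipschitzOnWith_iff_dist_le_mul.1 (hLlip x hxK (σ j)) y hyx x hxball
  have hfL : dist (f (σ k) x) (f (σ k) y) ≤ (L x : ℝ) * dist y x := by
    rw [dist_comm y x] at *
    exact lipschitzOnWith_iff_dist_le_mul.1 (hLlip x hxK (σ k)) x hxball y hyx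
  have h2 : dist (g x) (f (σ k) x) < ε/3 := by
    rw [dist_comm]
    exact hk x hxt
  have htri := dist_triangle4 (g y) (g x) (f (σ k) x) (f (σ k) y)
  linarith

/-- Rockafellar's compactness theorem: if `C` is a relatively open convex set and
`(f k)` is a sequence of finite convex functions on `C` that is pointwise bounded,
then some subsequence converges uniformly on closed bounded subsets of `C` to a
finite convex function. -/
theorem rockafellar_convex_compactness {n : ℕ} (C : Set (EuclideanSpace ℝ (Fin n)))
    (hCconv : Convex ℝ C) (hCrel : C = intrinsicInterior ℝ C)
    (f : ℕ → EuclideanSpace ℝ (Fin n) → ℝ)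
    (hconv : ∀ k, ConvexOn ℝ C (f k))
    (hbdd : ∀ x ∈ C, ∃ M : ℝ, ∀ k, |f k x| ≤ M) :
    ∃ σ : ℕ → ℕ, StrictMono σ ∧ ∃ g : EuclideanSpace ℝ (Fin n) → ℝ, ConvexOn ℝ C g ∧
      ∀ K : Set (EuclideanSpace ℝ (Fin n)), K ⊆ C → IsClosed K → Bornology.IsBounded K →
        TendstoUniformlyOn (fun k => f (σ k)) g Filter.atTop K := by
  classical
  rcases C.eq_empty_or_nonempty with rfl | ⟨x0, hx0⟩
  · refine ⟨id, strictMono_id, fun _ => 0,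
      ⟨convex_empty, fun x hx => absurd hx (Set.notMem_empty x)⟩, fun K hK _ _ => ?_⟩
    rw [Set.subset_empty_iff.1 hK]
    exact tendstoUniformlyOn_empty
  have hx0A : x0 ∈ affineSpan ℝ C := subset_affineSpan ℝ C hx0
  -- the preimage of `C` in its affine span is open
  have hsubint : ((↑) ⁻¹' C : Set (affineSpan ℝ C)) ⊆
      interior ((↑) ⁻¹' C : Set (affineSpan ℝ C)) := by
    rintro y hy
    have hyi : (y : EuclideanSpace ℝ (Fin n)) ∈ intrinsicInterior ℝ C := by
      rw [← hCrel]
      exact hy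
    obtain ⟨z, hz, hzy⟩ := mem_intrinsicInterior.1 hyi
    rwa [← Subtype.coe_injective hzy]
  have hT : IsOpen ((↑) ⁻¹' C : Set (affineSpan ℝ C)) := by
    rw [Subset.antisymm hsubint interior_subset]
    exact isOpen_interior
  -- transfer everything to the direction of the affine span
  set V := (affineSpan ℝ C).direction with hV
  have hψcont : Continuous (fun v : V => (v : EuclideanSpace ℝ (Fin n)) + x0) :=
    continuous_subtype_val.add continuous_const
  have hmem : ∀ v : V, (v : EuclideanSpace ℝ (Fin n)) + x0 ∈ affineSpan ℝ C := fun v =>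
    AffineSubspace.vadd_mem_of_mem_direction v.2 hx0A
  set C' : Set V := {v : V | (v : EuclideanSpace ℝ (Fin n)) + x0 ∈ C} with hC'def
  have hC'open : IsOpen C' := by
    have : C' = (fun v : V => (⟨(v : EuclideanSpace ℝ (Fin n)) + x0, hmem v⟩ : affineSpan ℝ C))
        ⁻¹' ((↑) ⁻¹' C : Set (affineSpan ℝ C)) := rfl
    rw [this]
    exact hT.preimage (Continuous.subtype_mk hψcont _)
  have hkey : ∀ (a b : ℝ), a + b = 1 → ∀ u v : V,
      ((a • u + b • v : V) : EuclideanSpace ℝ (Fin n)) + x0 =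
        a • ((u : EuclideanSpace ℝ (Fin n)) + x0) + b • ((v : EuclideanSpace ℝ (Fin n)) + x0) := by
    intro a b hab u v
    have hc : ((a • u + b • v : V) : EuclideanSpace ℝ (Fin n)) =
        a • (u : EuclideanSpace ℝ (Fin n)) + b • (v : EuclideanSpace ℝ (Fin n)) := by
      push_cast
      ring_nf
    have hstep : a • ((u : EuclideanSpace ℝ (Fin n)) + x0) +
        b • ((v : EuclideanSpace ℝ (Fin n)) + x0) =
        (a • (u : EuclideanSpace ℝ (Fin n)) + b • (v : EuclideanSpace ℝ (Fin n))) +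
          (a + b) • x0 := by
      rw [add_smul, smul_add, smul_add]
      abel
    rw [hc, hstep, hab, one_smul]
  have hC'conv : Convex ℝ C' := by
    intro u hu v hv a b ha hb hab
    show ((a • u + b • v : V) : EuclideanSpace ℝ (Fin n)) + x0 ∈ C
    rw [hkey a b hab u v]
    exact hCconv hu hv ha hb hab
  set f' : ℕ → V → ℝ := fun k v => f k ((v : EuclideanSpace ℝ (Fin n)) + x0) with hf'def
  have hconv' : ∀ k, ConvexOn ℝ C' (f' k) := by
    intro k
    refine ⟨hC'conv, fun u hu v hv a b ha hb hab => ?_⟩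
    show f k (((a • u + b • v : V) : EuclideanSpace ℝ (Fin n)) + x0) ≤ _
    rw [hkey a b hab u v]
    exact (hconv k).2 hu hv ha hb hab
  have hbdd' : ∀ v ∈ C', ∃ M : ℝ, ∀ k, |f' k v| ≤ M := fun v hv => hbdd _ hv
  obtain ⟨σ, hσ, g', hg'conv, hg'⟩ := core_rockafellar C' hC'open hC'conv f' hconv' hbdd'
  -- pull the limit function back to the ambient space
  set g : EuclideanSpace ℝ (Fin n) → ℝ := fun x =>
    if h : x - x0 ∈ (affineSpan ℝ C).direction then g' ⟨x - x0, h⟩ else 0 with hgdef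
  have hdir : ∀ x ∈ C, x - x0 ∈ (affineSpan ℝ C).direction := fun x hx =>
    AffineSubspace.vsub_mem_direction (subset_affineSpan ℝ C hx) hx0A
  have hmemC' : ∀ x (hx : x ∈ C), (⟨x - x0, hdir x hx⟩ : V) ∈ C' := by
    intro x hx
    show (x - x0) + x0 ∈ C
    rwa [sub_add_cancel]
  have hgval : ∀ x (hx : x ∈ C), g x = g' ⟨x - x0, hdir x hx⟩ := by
    intro x hx
    simp only [hgdef, dif_pos (hdir x hx)]
  have hgconv : ConvexOn ℝ C g := by
    refine ⟨hCconv, fun x hx y hy a b ha hb hab => ?_⟩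
    have hw : a • x + b • y ∈ C := hCconv hx hy ha hb hab
    have hsub : (⟨a • x + b • y - x0, hdir _ hw⟩ : V) =
        a • (⟨x - x0, hdir x hx⟩ : V) + b • (⟨y - x0, hdir y hy⟩ : V) := by
      apply Subtype.ext
      push_cast
      have hstep : a • (x - x0) + b • (y - x0) = (a • x + b • y) - (a + b) • x0 := by
        rw [add_smul, smul_sub, smul_sub]
        abel
      rw [hstep, hab, one_smul]
    rw [hgval _ hw, hgval x hx, hgval y hy, hsub]
    exact hg'conv.2 (hmemC' x hx) (hmemC' y hy) ha hb hab
  refine ⟨σ, hσ, g, hgconv, fun K hKC hKcl hKbd => ?_⟩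
  set K' : Set V := {v : V | (v : EuclideanSpace ℝ (Fin n)) + x0 ∈ K} with hK'def
  have hK'C' : K' ⊆ C' := fun v hv => hKC hv
  have hK'cl : IsClosed K' := hKcl.preimage hψcont
  have hK'bd : IsBounded K' := by
    obtain ⟨R, hR⟩ := (isBounded_iff_forall_norm_le).1 hKbd
    refine (isBounded_iff_forall_norm_le).2 ⟨R + ‖x0‖, fun v hv => ?_⟩
    have h1 : ‖(v : EuclideanSpace ℝ (Fin n)) + x0‖ ≤ R := hR _ hv
    have h2 : ‖(v : V)‖ = ‖((v : EuclideanSpace ℝ (Fin n)) + x0) - x0‖ := by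
      rw [add_sub_cancel_right]
      rfl
    rw [h2]
    calc ‖((v : EuclideanSpace ℝ (Fin n)) + x0) - x0‖
        ≤ ‖(v : EuclideanSpace ℝ (Fin n)) + x0‖ + ‖x0‖ := norm_sub_le _ _
      _ ≤ R + ‖x0‖ := by linarith
  have huc := hg' K' hK'C' hK'cl hK'bd
  rw [Metric.tendstoUniformlyOn_iff] at huc ⊢
  intro ε hε
  filter_upwards [huc ε hε] with k hk x hxK
  have hxC : x ∈ C := hKC hxK
  have hvK' : (⟨x - x0, hdir x hxC⟩ : V) ∈ K' := by
    show (x - x0) + x0 ∈ K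
    rwa [sub_add_cancel]
  have h := hk _ hvK'
  have hfval : f' (σ k) ⟨x - x0, hdir x hxC⟩ = f (σ k) x := by
    simp only [hf'def]
    rw [sub_add_cancel]
  rw [hgval x hxC, ← hfval]
  exact h
end
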